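/- Let α = 3.5, λ_MT > 0, Υ ≥ 0, C ≥ 0, P_i ≥ 0 and P̃ ≥ 0. Let f(λ) = 1 − (1 + λ_MT/(α·λ))^(−α) and g(λ) = λ_MT/λ − f(λ) for λ > 0. Then the function Den(λ) = (1 + Υ·f(λ)) · (C + P_i/f(λ) + P̃·g(λ)/f(λ)) is convex on the set {λ > 0 : λ_MT/λ ≤ 2α/(α−1) = 2.8}. -/

import Mathlib

open Real Filter Set Topology


noncomputable def uu (lMT x : ℝ) : ℝ := 1 + lMT / (3.5 * x)
noncomputable def ff (lMT x : ℝ) : ℝ := 1 - uu lMT x ^ (-3.5 : ℝ)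
noncomputable def ff1 (lMT x : ℝ) : ℝ := -(lMT * uu lMT x ^ (-4.5 : ℝ) / x ^ 2)
noncomputable def ff2 (lMT x : ℝ) : ℝ := lMT * uu lMT x ^ (-5.5 : ℝ) * (2 - 5 * lMT / (7 * x)) / x ^ 3

lemma one_lt_uu {lMT l : ℝ} (hMT : 0 < lMT) (hl : 0 < l) : 1 < uu lMT l := by
  unfold uu; nlinarith [div_pos hMT (by linarith : (0:ℝ) < 3.5 * l)]

lemma uu_pos {lMT l : ℝ} (hMT : 0 < lMT) (hl : 0 < l) : 0 < uu lMT l :=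
  lt_trans one_pos (one_lt_uu hMT hl)

lemma ff_pos {lMT l : ℝ} (hMT : 0 < lMT) (hl : 0 < l) : 0 < ff lMT l :=
  sub_pos.2 (Real.rpow_lt_one_of_one_lt_of_neg (one_lt_uu hMT hl) (by norm_num))

lemma rpow_le_one_uu {lMT l : ℝ} (hMT : 0 < lMT) (hl : 0 < l) (p : ℝ) (hp : p ≤ 0) :
    uu lMT l ^ p ≤ 1 :=
  Real.rpow_le_one_of_one_le_of_nonpos (one_lt_uu hMT hl).le hp

-- the crucial scalar inequality
lemma key1 (x : ℝ) (hx0 : 0 < x) (hx8 : x ≤ 4/5) :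
    (1 - (1+x) ^ (-3.5 : ℝ)) * (2 - 2.5*x) ≤ 7*x*(1+x) ^ (-3.5 : ℝ) := by
  have hx1 : (0:ℝ) < 1 + x := by linarith
  set y := (1+x) ^ (3.5 : ℝ) with hy
  have hy0 : 0 < y := Real.rpow_pos_of_pos hx1 _
  have hy1 : 1 ≤ y := by
    rw [hy]
    calc (1:ℝ) = 1 ^ (3.5:ℝ) := (Real.one_rpow _).symm
    _ ≤ (1+x) ^ (3.5:ℝ) := Real.rpow_le_rpow (by norm_num) (by linarith) (by norm_num)
  have hv : (1+x) ^ (-3.5 : ℝ) = y⁻¹ := by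
    rw [hy, ← Real.rpow_neg_one, ← Real.rpow_mul hx1.le]; norm_num
  have hy2 : y * y = (1+x)^7 := by
    rw [hy, ← Real.rpow_add hx1, show (3.5:ℝ) + 3.5 = ((7:ℕ):ℝ) by norm_num,
      Real.rpow_natCast]
  have hpoly : (1+x)^7 * (2 - 2.5*x)^2 ≤ (2 + 4.5*x)^2 := by
    nlinarith [pow_nonneg hx0.le 3, pow_nonneg hx0.le 4, pow_nonneg hx0.le 5, pow_nonneg hx0.le 6,
      mul_nonneg (pow_nonneg hx0.le 3) (sub_nonneg.2 hx8),
      mul_nonneg (pow_nonneg hx0.le 4) (sub_nonneg.2 hx8),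
      mul_nonneg (pow_nonneg hx0.le 5) (sub_nonneg.2 hx8),
      mul_nonneg (mul_nonneg (pow_nonneg hx0.le 3) (sub_nonneg.2 hx8)) (sub_nonneg.2 hx8)]
  have hkey : (y-1)*(2-2.5*x) ≤ 7*x := by
    rcases le_or_gt (2 - 2.5*x) 0 with h | h
    · nlinarith
    · have hsq : (y*(2-2.5*x))^2 ≤ (2+4.5*x)^2 := by
        calc (y*(2-2.5*x))^2 = (y*y) * (2-2.5*x)^2 := by ring
        _ = (1+x)^7 * (2-2.5*x)^2 := by rw [hy2]
        _ ≤ (2+4.5*x)^2 := hpoly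
      have hyx : y * (2-2.5*x) ≤ 2+4.5*x := by nlinarith [mul_pos hy0 h]
      nlinarith
  rw [hv]
  have h1 : 1 - y⁻¹ = (y-1) * y⁻¹ := by field_simp
  rw [h1]
  have := mul_le_mul_of_nonneg_right hkey (inv_nonneg.2 hy0.le)
  calc (y-1)*y⁻¹*(2-2.5*x) = (y-1)*(2-2.5*x)*y⁻¹ := by ring
  _ ≤ 7*x*y⁻¹ := this

-- key numerator inequality for (1/f)''
lemma key_num {lMT l : ℝ} (hMT : 0 < lMT) (hm : 5*lMT/14 < l) :
    ff lMT l * ff2 lMT l ≤ 2 * (ff1 lMT l)^2 := by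
  have hl : 0 < l := lt_of_le_of_lt (by positivity) hm
  set x := lMT / (3.5 * l) with hxdef
  have hx0 : 0 < x := by positivity
  have hx8 : x ≤ 4/5 := by
    rw [hxdef, div_le_iff₀ (by linarith : (0:ℝ) < 3.5 * l)]; linarith
  have hx1 : (0:ℝ) < 1 + x := by linarith
  have hlMT : lMT = 3.5 * x * l := by rw [hxdef]; field_simp
  have huu : uu lMT l = 1 + x := by rw [hxdef]; rfl
  set v := (1+x) ^ (-3.5 : ℝ) with hvdef
  set w := (1+x) ^ (-5.5 : ℝ) with hwdef
  have hw0 : 0 < w := Real.rpow_pos_of_pos hx1 _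
  have hA : (1+x) ^ (-4.5 : ℝ) = w * (1+x) := by
    rw [hwdef, show (-4.5:ℝ) = -5.5 + 1 by norm_num, Real.rpow_add hx1, Real.rpow_one]
  have hvw : v = w * ((1+x)*(1+x)) := by
    rw [hvdef, hwdef, show (-3.5:ℝ) = -5.5 + 1 + 1 by norm_num,
      Real.rpow_add hx1, Real.rpow_add hx1, Real.rpow_one]; ring
  have h25 : 5*lMT/(7*l) = 2.5 * x := by rw [hlMT]; field_simp; ring
  have hlhs : ff lMT l * ff2 lMT l = ((1-v)*(2-2.5*x)) * (lMT*w/l^3) := by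
    unfold ff ff2
    rw [huu, h25, ← hvdef, ← hwdef]; ring
  have hrhs : 2 * (ff1 lMT l)^2 = (7*x*v) * (lMT*w/l^3) := by
    unfold ff1
    rw [huu, hA, hvw, hlMT]; field_simp; ring
  rw [hlhs, hrhs]
  exact mul_le_mul_of_nonneg_right (key1 x hx0 hx8) (by positivity)

lemma convexOn_of_hasDerivAt2 {m : ℝ} (hm : 0 < m) {F F1 F2 : ℝ → ℝ}
    (h1 : ∀ l : ℝ, 0 < l → HasDerivAt F (F1 l) l)
    (h2 : ∀ l : ℝ, 0 < l → HasDerivAt F1 (F2 l) l)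
    (h3 : ∀ l : ℝ, m < l → 0 ≤ F2 l) : ConvexOn ℝ (Ici m) F := by
  have hpos : ∀ l : ℝ, l ∈ Ici m → 0 < l := fun l hl => lt_of_lt_of_le hm hl
  have heq : ∀ x : ℝ, 0 < x → deriv F =ᶠ[nhds x] F1 := by
    intro x hx
    exact Filter.eventuallyEq_of_mem (Ioi_mem_nhds hx) (fun y hy => (h1 y hy).deriv)
  apply convexOn_of_deriv2_nonneg (convex_Ici m)
  · exact fun l hl => (h1 l (hpos l hl)).continuousAt.continuousWithinAt
  · rw [interior_Ici]
    exact fun l hl => (h1 l (hm.trans hl)).differentiableAt.differentiableWithinAt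
  · rw [interior_Ici]
    intro l hl
    exact (((h2 l (hm.trans hl)).differentiableAt.congr_of_eventuallyEq
      (heq l (hm.trans hl))).differentiableWithinAt)
  · rw [interior_Ici]
    intro l hl
    have h0 : (0:ℝ) < l := hm.trans hl
    have hd : deriv (deriv F) l = F2 l := by
      rw [Filter.EventuallyEq.deriv_eq (heq l h0)]
      exact (h2 l h0).deriv
    show 0 ≤ deriv (deriv F) l
    rw [hd]
    exact h3 l hl

section derivs
variable {lMT l : ℝ}

lemma hasDerivAt_uu (lMT : ℝ) (hl : 0 < l) :
    HasDerivAt (uu lMT) (-(lMT / 3.5) / l ^ 2) l := by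
  have h := ((hasDerivAt_inv hl.ne').const_mul (lMT / 3.5)).const_add 1
  have e : (fun x : ℝ => 1 + lMT / 3.5 * x⁻¹) = uu lMT := by
    funext x; unfold uu; ring
  rw [e] at h
  refine h.congr_deriv ?_; ring

lemma hasDerivAt_ff (hMT : 0 < lMT) (hl : 0 < l) :
    HasDerivAt (ff lMT) (ff1 lMT l) l := by
  have h := ((hasDerivAt_uu lMT hl).rpow_const
    (p := (-3.5 : ℝ)) (Or.inl (uu_pos hMT hl).ne')).const_sub 1
  have e : (fun x : ℝ => 1 - uu lMT x ^ (-3.5 : ℝ)) = ff lMT := rfl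
  rw [e] at h
  refine h.congr_deriv ?_
  unfold ff1
  rw [show (-3.5 : ℝ) - 1 = -4.5 by norm_num]
  ring

lemma hasDerivAt_ff1 (hMT : 0 < lMT) (hl : 0 < l) :
    HasDerivAt (ff1 lMT) (ff2 lMT l) l := by
  have ha := (hasDerivAt_uu lMT hl).rpow_const
    (p := (-4.5 : ℝ)) (Or.inl (uu_pos hMT hl).ne')
  have hb := (hasDerivAt_pow 2 l).inv (pow_ne_zero 2 hl.ne')
  have h := ((ha.mul hb).const_mul lMT).neg
  have e : (fun x : ℝ => -(lMT * (uu lMT x ^ (-4.5 : ℝ) * (x ^ 2)⁻¹))) = ff1 lMT := by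
    funext x; unfold ff1; ring
  rw [← e]
  refine h.congr_deriv ?_
  simp only [Pi.inv_apply, Pi.mul_apply, Pi.pow_apply, Pi.neg_apply, Pi.add_apply, id_eq]
  unfold ff2
  rw [show (-4.5 : ℝ) - 1 = -5.5 by norm_num,
    show (-4.5 : ℝ) = -5.5 + 1 by norm_num,
    Real.rpow_add (uu_pos hMT hl), Real.rpow_one]
  unfold uu
  have h2 : l ≠ 0 := hl.ne'
  field_simp
  ring

end derivs

-- (1) f is convex
lemma convex_ff {lMT : ℝ} (hMT : 0 < lMT) :
    ConvexOn ℝ (Ici (5*lMT/14)) (ff lMT) := by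
  apply convexOn_of_hasDerivAt2 (by positivity)
    (fun l hl => hasDerivAt_ff hMT hl) (fun l hl => hasDerivAt_ff1 hMT hl)
  intro l hl
  have h0 : (0:ℝ) < l := lt_of_le_of_lt (by positivity) hl
  unfold ff2
  have h1 : 0 ≤ 2 - 5*lMT/(7*l) := by
    rw [sub_nonneg, div_le_iff₀ (by linarith : (0:ℝ) < 7*l)]; linarith
  have h2 : (0:ℝ) ≤ uu lMT l ^ (-5.5:ℝ) := (Real.rpow_pos_of_pos (uu_pos hMT h0) _).le
  positivity

-- (2) g is convex
lemma convex_gg {lMT : ℝ} (hMT : 0 < lMT) :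
    ConvexOn ℝ (Ici (5*lMT/14)) (fun x => lMT/x - ff lMT x) := by
  apply convexOn_of_hasDerivAt2 (m := 5*lMT/14) (by positivity)
    (F1 := fun x => -(lMT/x^2) - ff1 lMT x) (F2 := fun x => 2*lMT/x^3 - ff2 lMT x)
  · intro l hl
    have h := (((hasDerivAt_inv hl.ne').const_mul lMT).sub (hasDerivAt_ff hMT hl))
    have e : (fun x : ℝ => lMT * x⁻¹ - ff lMT x) = (fun x => lMT/x - ff lMT x) := by
      funext x; ring
    rw [← e]
    refine h.congr_deriv ?_; ring
  · intro l hl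
    have hb := ((hasDerivAt_pow 2 l).inv (pow_ne_zero 2 hl.ne')).const_mul lMT
    have h := (hb.neg.sub (hasDerivAt_ff1 hMT hl))
    have e : (fun x : ℝ => -(lMT * (x^2)⁻¹) - ff1 lMT x)
        = (fun x : ℝ => -(lMT/x^2) - ff1 lMT x) := by
      funext x; ring
    rw [← e]
    refine h.congr_deriv ?_
    field_simp; ring
  · intro l hl
    have h0 : (0:ℝ) < l := lt_of_le_of_lt (by positivity) hl
    unfold ff2
    have h1 : 0 ≤ 2 - 5*lMT/(7*l) := by
      rw [sub_nonneg, div_le_iff₀ (by linarith : (0:ℝ) < 7*l)]; linarith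
    have h2 : uu lMT l ^ (-5.5:ℝ) ≤ 1 := rpow_le_one_uu hMT h0 _ (by norm_num)
    have h3 : (0:ℝ) < uu lMT l ^ (-5.5:ℝ) := Real.rpow_pos_of_pos (uu_pos hMT h0) _
    have h4 : (0:ℝ) < 5*lMT/(7*l) := by positivity
    have h5 := mul_le_mul_of_nonneg_right h2 h1
    rw [sub_nonneg, div_le_div_iff₀ (by positivity) (by positivity)]
    nlinarith [mul_pos hMT (pow_pos h0 3), mul_le_mul_of_nonneg_left h5
      (le_of_lt (mul_pos hMT (pow_pos h0 3)))]

-- (3) 1/f is convex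
lemma convex_qq {lMT : ℝ} (hMT : 0 < lMT) :
    ConvexOn ℝ (Ici (5*lMT/14)) (fun x => (ff lMT x)⁻¹) := by
  apply convexOn_of_hasDerivAt2 (m := 5*lMT/14) (by positivity)
    (F1 := fun x => -(ff1 lMT x) / (ff lMT x)^2)
    (F2 := fun x => (2*(ff1 lMT x)^2 - ff lMT x * ff2 lMT x) / (ff lMT x)^3)
  · intro l hl
    exact (hasDerivAt_ff hMT hl).inv (ff_pos hMT hl).ne'
  · intro l hl
    have hfne : ff lMT l ≠ 0 := (ff_pos hMT hl).ne'
    have hd := ((hasDerivAt_ff hMT hl).pow 2).inv (pow_ne_zero 2 hfne)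
    have h := (hasDerivAt_ff1 hMT hl).neg.mul hd
    have e : (fun x : ℝ => -(ff1 lMT x) * ((ff lMT x)^2)⁻¹)
        = (fun x : ℝ => -(ff1 lMT x) / (ff lMT x)^2) := by
      funext x; ring
    rw [← e]
    refine h.congr_deriv ?_
    simp only [Pi.inv_apply, Pi.mul_apply, Pi.pow_apply, Pi.neg_apply, Pi.add_apply, id_eq]
    field_simp
    ring
  · intro l hl
    have h0 : (0:ℝ) < l := lt_of_le_of_lt (by positivity) hl
    have hf := ff_pos hMT h0
    have := key_num hMT hl
    apply div_nonneg (by linarith) (le_of_lt (by positivity))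

-- (4) (lMT/x)/f is convex
lemma convex_hh {lMT : ℝ} (hMT : 0 < lMT) :
    ConvexOn ℝ (Ici (5*lMT/14)) (fun x => lMT/x * (ff lMT x)⁻¹) := by
  apply convexOn_of_hasDerivAt2 (m := 5*lMT/14) (by positivity)
    (F1 := fun x => lMT * (-(ff lMT x + x * ff1 lMT x) / (x * ff lMT x)^2))
    (F2 := fun x => lMT * ((2*(ff lMT x + x*ff1 lMT x)^2
      - (x*ff lMT x)*(2*ff1 lMT x + x*ff2 lMT x)) / (x*ff lMT x)^3))
  · intro l hl
    have hwne : l * ff lMT l ≠ 0 := by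
      exact mul_ne_zero hl.ne' (ff_pos hMT hl).ne'
    have hw := (hasDerivAt_id l).mul (hasDerivAt_ff hMT hl)
    have h := (hw.inv hwne).const_mul lMT
    simp only [id_eq] at h
    have e : (fun x : ℝ => lMT * (x * ff lMT x)⁻¹)
        = (fun x : ℝ => lMT/x * (ff lMT x)⁻¹) := by
      funext x; rw [mul_inv]; ring
    rw [← e]
    refine h.congr_deriv ?_
    simp only [Pi.inv_apply, Pi.mul_apply, Pi.pow_apply, Pi.neg_apply, Pi.add_apply, id_eq]
    ring
  · intro l hl
    have hfne : ff lMT l ≠ 0 := (ff_pos hMT hl).ne'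
    have hwne : l * ff lMT l ≠ 0 := mul_ne_zero hl.ne' hfne
    have hw := (hasDerivAt_id l).mul (hasDerivAt_ff hMT hl)
    have hn := ((hasDerivAt_ff hMT hl).add
      ((hasDerivAt_id l).mul (hasDerivAt_ff1 hMT hl))).neg
    have hd := (hw.pow 2).inv (pow_ne_zero 2 hwne)
    have h := (hn.mul hd).const_mul lMT
    simp only [id_eq] at h
    have e : (fun x : ℝ => lMT * (-(ff lMT x + x * ff1 lMT x) * ((x * ff lMT x)^2)⁻¹))
        = (fun x : ℝ => lMT * (-(ff lMT x + x * ff1 lMT x) / (x * ff lMT x)^2)) := by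
      funext x; ring
    rw [← e]
    refine h.congr_deriv ?_
    simp only [Pi.inv_apply, Pi.mul_apply, Pi.pow_apply, Pi.neg_apply, Pi.add_apply, id_eq]
    have hl0 : l ≠ 0 := hl.ne'
    field_simp
    ring
  · intro l hl
    have h0 : (0:ℝ) < l := lt_of_le_of_lt (by positivity) hl
    have hf := ff_pos hMT h0
    have hw0 : (0:ℝ) < uu lMT l ^ (-5.5:ℝ) := Real.rpow_pos_of_pos (uu_pos hMT h0) _
    have hterm : 2*l*ff1 lMT l + l^2 * ff2 lMT l
        = -(9*lMT^2/(7*l^2) * uu lMT l ^ (-5.5:ℝ)) := by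
      unfold ff1 ff2
      rw [show (-4.5:ℝ) = -5.5 + 1 by norm_num, Real.rpow_add (uu_pos hMT h0),
        Real.rpow_one]
      unfold uu
      field_simp
      ring
    have hkey : (l*ff lMT l)*(2*ff1 lMT l + l*ff2 lMT l) ≤ 0 := by
      have : (l*ff lMT l)*(2*ff1 lMT l + l*ff2 lMT l)
          = ff lMT l * (2*l*ff1 lMT l + l^2 * ff2 lMT l) := by ring
      rw [this, hterm]
      have : (0:ℝ) ≤ 9*lMT^2/(7*l^2) * uu lMT l ^ (-5.5:ℝ) := by positivity
      nlinarith
    apply mul_nonneg hMT.le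
    apply div_nonneg _ (le_of_lt (by positivity))
    nlinarith [sq_nonneg (ff lMT l + l * ff1 lMT l)]

/-- Appendix C of the paper: convexity of the energy-efficiency denominator
`Den(λ) = (1 + Υ·f(λ))·(C + P_i/f(λ) + P̃·g(λ)/f(λ))` on the set
`{λ > 0 : λ_MT/λ ≤ 2α/(α−1) = 2.8}`, where `f(λ) = 1 − (1 + λ_MT/(α·λ))^(−α)`
and `g(λ) = λ_MT/λ − f(λ)`, with `α = 3.5`. -/
theorem energy_efficiency_denominator_convex (α lMT Υ C Pi Pt : ℝ)
    (hα : α = 3.5) (hMT : 0 < lMT) (hΥ : 0 ≤ Υ) (hC : 0 ≤ C) (hPi : 0 ≤ Pi)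
    (hPt : 0 ≤ Pt)
    (f g Den : ℝ → ℝ)
    (hf : ∀ l : ℝ, f l = 1 - (1 + lMT / (α * l)) ^ (-α))
    (hg : ∀ l : ℝ, g l = lMT / l - f l)
    (hDen : ∀ l : ℝ, Den l = (1 + Υ * f l) * (C + Pi / f l + Pt * g l / f l)) :
    ConvexOn ℝ {l : ℝ | 0 < l ∧ lMT / l ≤ 2 * α / (α - 1)} Den := by
  subst hα
  have hSet : {l : ℝ | 0 < l ∧ lMT / l ≤ 2 * 3.5 / (3.5 - 1)} = Ici (5*lMT/14) := by
    ext l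
    simp only [mem_setOf_eq, mem_Ici]
    constructor
    · rintro ⟨h0, h1⟩
      rw [div_le_iff₀ h0] at h1
      norm_num at h1 ⊢
      linarith
    · intro h
      have h0 : (0:ℝ) < l := lt_of_lt_of_le (by positivity) h
      refine ⟨h0, ?_⟩
      rw [div_le_iff₀ h0]
      norm_num
      linarith
  rw [hSet]
  set G : ℝ → ℝ := fun l => (C + Υ*Pi - Pt) + ((Υ*C) * ff lMT l + (Pi * (ff lMT l)⁻¹
    + ((Υ*Pt) * (lMT/l - ff lMT l) + Pt * (lMT/l * (ff lMT l)⁻¹)))) with hG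
  have hconv : ConvexOn ℝ (Ici (5*lMT/14)) G :=
    (convexOn_const _ (convex_Ici _)).add
      ((ConvexOn.smul (mul_nonneg hΥ hC) (convex_ff hMT)).add
        ((ConvexOn.smul hPi (convex_qq hMT)).add
          ((ConvexOn.smul (mul_nonneg hΥ hPt) (convex_gg hMT)).add
            (ConvexOn.smul hPt (convex_hh hMT)))))
  have hDeq : ∀ l ∈ Ici (5*lMT/14), Den l = G l := by
    intro l hlm
    have h0 : (0:ℝ) < l := lt_of_lt_of_le (by positivity) hlm
    have hffl : f l = ff lMT l := by rw [hf]; rfl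
    have hfpos := ff_pos hMT h0
    rw [hDen, hg, hffl, hG]
    have hne : ff lMT l ≠ 0 := hfpos.ne'
    field_simp
    ring
  obtain ⟨hcvx, hineq⟩ := hconv
  refine ⟨hcvx, ?_⟩
  intro x hx y hy a b ha hb hab
  have hxy : a • x + b • y ∈ Ici (5*lMT/14) := hcvx hx hy ha hb hab
  calc Den (a•x+b•y) = G (a•x+b•y) := hDeq _ hxy
    _ ≤ a • G x + b • G y := hineq hx hy ha hb hab
    _ = a • Den x + b • Den y := by rw [hDeq x hx, hDeq y hy]
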